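/- Let n, k ∈ ℕ with k ≤ n, let a : Fin n → ℝ be strictly increasing, set A = diag(a_0, …, a_{n−1}), and fix a k-element subset I = {i_1 < ⋯ < i_k} ⊆ Fin n with coordinate subspace E_I = span{e_i : i ∈ I}. For a k-dimensional subspace V ⊆ ℂ^n, the orthogonal projection matrices P_{exp(−tA)·V} converge in operator norm to P_{E_I} as t → −∞ if and only if V is the column span of an n×k matrix M, necessarily unique, whose entries satisfy: M_{i_j, j} = 1 for each 1 ≤ j ≤ k; M_{l, j} = 0 whenever l > i_j; and M_{i_m, j} = 0 whenever m ≠ j. Consequently, the unstable set of E_I under the flow V ↦ exp(−tA)·V is in bijection with ∏_{j=1}^{k} ℂ^{i_j − j}, a complex affine space of dimension Σ_{j=1}^{k} (i_j − j). -/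

import Mathlib

/-!
Move the `j`-th column of an echelon matrix `M` by `exp(−tA)` and rescale it by `e^{t a_{i_j}}`.
The pivot entry stays `1`, the entries in rows `l < i_j` are multiplied by
`e^{t (a_{i_j} − a_l)} → 0` as `t → −∞`, and those in rows `l > i_j` vanish: this basis of
`exp(−tA)·colSpan M` converges to `(e_{i_j})_j`. For a linearly independent family with column
matrix `B`, the projection onto its span is `B (B*B)⁻¹ B*`, which is continuous in `B`, so the
projections converge to `P_{E_I}`.

Conversely, every `k`-plane `V` is the column span of an echelon matrix whose pivots are the rows
in which some vector of `V` has its last nonzero entry. Since projections determine subspaces,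
the limit `P_{E_I}` forces these pivots to be `I`; the echelon matrix is unique because
coordinates in its columns are read off in the pivot rows. The free entries of column `j` are
those in the `i_j − j` non-pivot rows `l < i_j`.
-/

namespace Stmt11

/-- The linear map `exp(−tA) = diag(e^{−t a₀}, …, e^{−t a_{n−1}})` on `ℂⁿ`,
for `A = diag(a₀, …, a_{n−1})`. -/
noncomputable def flowMap (n : ℕ) (a : Fin n → ℝ) (t : ℝ) :
    EuclideanSpace ℂ (Fin n) →ₗ[ℂ] EuclideanSpace ℂ (Fin n) :=
  ((WithLp.linearEquiv 2 ℂ (Fin n → ℂ)).symm.toLinearMap.comp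
      (LinearMap.pi fun j : Fin n =>
        (Real.exp (-(t * a j)) : ℂ) • (LinearMap.proj j : (Fin n → ℂ) →ₗ[ℂ] ℂ))).comp
    (WithLp.linearEquiv 2 ℂ (Fin n → ℂ)).toLinearMap

/-- The orthogonal projection of `ℂⁿ` onto a subspace `V`, as a continuous linear
map `ℂⁿ → ℂⁿ` (the "projection matrix"). -/
noncomputable def projCLM {n : ℕ} (V : Submodule ℂ (EuclideanSpace ℂ (Fin n))) :
    EuclideanSpace ℂ (Fin n) →L[ℂ] EuclideanSpace ℂ (Fin n) :=
  V.subtypeL.comp (V.orthogonalProjection)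

/-- The coordinate subspace `E_I = span {eᵢ : i ∈ I}` of `ℂⁿ`. -/
noncomputable def coordSub (n : ℕ) (I : Finset (Fin n)) :
    Submodule ℂ (EuclideanSpace ℂ (Fin n)) :=
  Submodule.span ℂ ((fun i => EuclideanSpace.single i (1 : ℂ)) '' (I : Set (Fin n)))

/-- The `j`-th column of an `n × k` matrix, as a vector of `ℂⁿ`. -/
noncomputable def colVec {n k : ℕ} (M : Matrix (Fin n) (Fin k) ℂ) (j : Fin k) :
    EuclideanSpace ℂ (Fin n) :=
  (WithLp.linearEquiv 2 ℂ (Fin n → ℂ)).symm (fun l => M l j)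

/-- The column span of an `n × k` matrix. -/
noncomputable def colSpan {n k : ℕ} (M : Matrix (Fin n) (Fin k) ℂ) :
    Submodule ℂ (EuclideanSpace ℂ (Fin n)) :=
  Submodule.span ℂ (Set.range (colVec M))

/-- The echelon conditions on `M` relative to the pivot embedding
`σ : Fin k ↪o Fin n` (with `σ j` the `j`-th pivot row, `I = {i₁ < ⋯ < i_k}`):
`M_{i_j, j} = 1`; `M_{l, j} = 0` for `l > i_j`; `M_{i_m, j} = 0` for `m ≠ j`. -/
def Echelon {n k : ℕ} (σ : Fin k ↪o Fin n) (M : Matrix (Fin n) (Fin k) ℂ) : Prop :=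
  (∀ j : Fin k, M (σ j) j = 1) ∧
  (∀ (j : Fin k) (l : Fin n), σ j < l → M l j = 0) ∧
  (∀ j m : Fin k, m ≠ j → M (σ m) j = 0)

open Filter Topology ContinuousLinearMap
open scoped InnerProductSpace

section OrthogonalProjection

variable {𝕜 E : Type*} [RCLike 𝕜] [NormedAddCommGroup E] [InnerProductSpace 𝕜 E]

variable (𝕜) {ι : Type*} [Fintype ι]

instance finiteDimensional_span_range (w : ι → E) :
    FiniteDimensional 𝕜 (Submodule.span 𝕜 (Set.range w)) :=
  FiniteDimensional.span_of_finite 𝕜 (Set.finite_range w)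

noncomputable def combinationCLM (w : ι → E) : EuclideanSpace 𝕜 ι →L[𝕜] E :=
  ∑ j, (EuclideanSpace.proj j : EuclideanSpace 𝕜 ι →L[𝕜] 𝕜).smulRight (w j)

theorem coe_combinationCLM (w : ι → E) :
    (combinationCLM 𝕜 w : EuclideanSpace 𝕜 ι →ₗ[𝕜] E) =
      Fintype.linearCombination 𝕜 w ∘ₗ (WithLp.linearEquiv 2 𝕜 (ι → 𝕜)).toLinearMap := by
  ext c
  simp [combinationCLM, Fintype.linearCombination_apply]

theorem range_combinationCLM (w : ι → E) :
    (combinationCLM 𝕜 w : EuclideanSpace 𝕜 ι →ₗ[𝕜] E).range = Submodule.span 𝕜 (Set.range w) := by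
  rw [coe_combinationCLM, LinearMap.range_comp_of_range_eq_top _ (LinearEquiv.range _),
    Fintype.range_linearCombination]

theorem injective_combinationCLM_iff {w : ι → E} :
    Function.Injective (combinationCLM 𝕜 w) ↔ LinearIndependent 𝕜 w := by
  rw [linearIndependent_iff_injective_fintypeLinearCombination, ← coe_coe, coe_combinationCLM,
    LinearMap.coe_comp, LinearEquiv.coe_toLinearMap, EquivLike.injective_comp]

theorem continuous_combinationCLM : Continuous (combinationCLM 𝕜 : (ι → E) → _) :=
  continuous_finsetSum _ fun j _ =>
    (smulRightL 𝕜 (EuclideanSpace 𝕜 ι) E (EuclideanSpace.proj j)).continuous.comp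
      (continuous_apply j)

variable {𝕜}

variable [CompleteSpace E] {F : Type*} [NormedAddCommGroup F] [InnerProductSpace 𝕜 F]
  [CompleteSpace F] [FiniteDimensional 𝕜 F]

theorem isUnit_adjoint_comp_self {B : F →L[𝕜] E} (hB : Function.Injective B) :
    IsUnit (adjoint B ∘L B) := by
  have hker : (adjoint B ∘L B : F →ₗ[𝕜] F).ker = ⊥ := by
    rw [ker_adjoint_comp_self, LinearMap.ker_eq_bot]
    exact hB
  have hinj := LinearMap.ker_eq_bot.1 hker
  exact isUnit_iff_bijective.2 ⟨hinj, LinearMap.injective_iff_surjective.1 hinj⟩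

theorem starProjection_range_eq {B : F →L[𝕜] E} (hB : Function.Injective B) :
    (B : F →ₗ[𝕜] E).range.starProjection =
      B ∘L Ring.inverse (adjoint B ∘L B) ∘L adjoint B := by
  ext v
  refine Submodule.eq_starProjection_of_mem_orthogonal ⟨_, rfl⟩ ?_
  rw [orthogonal_range, LinearMap.mem_ker, coe_coe, map_sub, sub_eq_zero]
  calc adjoint B v
      = ((adjoint B ∘L B) * Ring.inverse (adjoint B ∘L B)) (adjoint B v) := by
        rw [Ring.mul_inverse_cancel _ (isUnit_adjoint_comp_self hB)]; rfl
    _ = _ := rfl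

theorem tendsto_starProjection_range {α : Type*} {l : Filter α} {B : α → F →L[𝕜] E}
    {B₀ : F →L[𝕜] E} (hB : Tendsto B l (𝓝 B₀)) (hinj : ∀ x, Function.Injective (B x))
    (hinj₀ : Function.Injective B₀) :
    Tendsto (fun x => (B x : F →ₗ[𝕜] E).range.starProjection) l
      (𝓝 (B₀ : F →ₗ[𝕜] E).range.starProjection) := by
  simp only [starProjection_range_eq, hinj, hinj₀]
  obtain ⟨G, hG⟩ := isUnit_adjoint_comp_self hinj₀
  have hadj : Continuous (adjoint : (F →L[𝕜] E) → (E →L[𝕜] F)) := adjoint.continuous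
  have hinv : ContinuousAt (fun B : F →L[𝕜] E => Ring.inverse (adjoint B ∘L B)) B₀ := by
    have h := NormedRing.inverse_continuousAt G
    rw [hG] at h
    exact h.comp (f := fun B : F →L[𝕜] E => adjoint B ∘L B)
      (hadj.clm_comp continuous_id).continuousAt
  exact (continuousAt_id.clm_comp (hinv.clm_comp hadj.continuousAt)).tendsto.comp hB

theorem tendsto_starProjection_span {α : Type*} {l : Filter α} {w : α → ι → E} {w₀ : ι → E}
    (hw : Tendsto w l (𝓝 w₀)) (hli : ∀ x, LinearIndependent 𝕜 (w x))
    (hli₀ : LinearIndependent 𝕜 w₀) :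
    Tendsto (fun x => (Submodule.span 𝕜 (Set.range (w x))).starProjection) l
      (𝓝 (Submodule.span 𝕜 (Set.range w₀)).starProjection) := by
  simp only [← range_combinationCLM]
  exact tendsto_starProjection_range ((continuous_combinationCLM 𝕜).tendsto w₀ |>.comp hw)
    (fun x => (injective_combinationCLM_iff 𝕜).2 (hli x)) ((injective_combinationCLM_iff 𝕜).2 hli₀)

end OrthogonalProjection

section Pivots

variable {𝕜 ι κ : Type*} [RCLike 𝕜] [Fintype κ] [DecidableEq κ]

theorem sum_smul_apply_of_pivot {u : κ → EuclideanSpace 𝕜 ι} {σ : κ → ι}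
    (hu : ∀ j m, u j (σ m) = if m = j then 1 else 0) (c : κ → 𝕜) (m : κ) :
    (∑ j, c j • u j) (σ m) = c m := by
  simp [WithLp.ofLp_sum, hu]

theorem linearIndependent_of_pivot {u : κ → EuclideanSpace 𝕜 ι} {σ : κ → ι}
    (hu : ∀ j m, u j (σ m) = if m = j then 1 else 0) : LinearIndependent 𝕜 u := by
  refine Fintype.linearIndependent_iff.2 fun c hc m => ?_
  rw [← sum_smul_apply_of_pivot hu c m, hc, WithLp.ofLp_zero, Pi.zero_apply]

end Pivots

theorem span_range_smul_eq {R N ι : Type*} [Field R] [AddCommGroup N] [Module R N]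
    {v : ι → N} {c : ι → R} (hc : ∀ i, c i ≠ 0) :
    Submodule.span R (Set.range fun i => c i • v i) = Submodule.span R (Set.range v) := by
  apply le_antisymm <;> rw [Submodule.span_le] <;> rintro _ ⟨i, rfl⟩
  · exact Submodule.smul_mem _ _ (Submodule.subset_span ⟨i, rfl⟩)
  · rw [← inv_smul_smul₀ (hc i) (v i)]
    exact Submodule.smul_mem _ _ (Submodule.subset_span ⟨i, rfl⟩)

section LastNonzero

variable {ι κ R : Type*} [LinearOrder ι]

def IsLastNonzero [Zero R] (v : ι → R) (l : ι) : Prop :=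
  v l ≠ 0 ∧ ∀ m, l < m → v m = 0

theorem exists_isLastNonzero [Zero R] [Finite ι] {v : ι → R} (hv : v ≠ 0) :
    ∃ l, IsLastNonzero v l := by
  obtain ⟨l, hl⟩ := Function.ne_iff.1 hv
  obtain ⟨l, hl, hmax⟩ := (Set.toFinite {l | v l ≠ 0}).exists_maximal ⟨l, hl⟩
  exact ⟨l, hl, fun m hlm => by_contra fun hm => (hmax hm hlm.le).not_gt hlm⟩

theorem linearIndependent_of_isLastNonzero [Ring R] [NoZeroDivisors R] [Fintype κ]
    {u : κ → ι → R} {τ : κ → ι} (hτ : Function.Injective τ)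
    (hu : ∀ i, IsLastNonzero (u i) (τ i)) : LinearIndependent R u := by
  classical
  refine Fintype.linearIndependent_iff.2 fun c hc => ?_
  by_contra! hne
  obtain ⟨i, hi⟩ := hne
  obtain ⟨i₀, hi₀, hmax⟩ :=
    (Finset.univ.filter (c · ≠ 0)).exists_max_image τ ⟨i, by simpa using hi⟩
  have hsum : (∑ i, c i • u i) (τ i₀) = c i₀ * u i₀ (τ i₀) := by
    rw [Finset.sum_apply, Finset.sum_eq_single i₀ _ (by simp)]
    · rfl
    · intro i _ hne
      by_cases hci : c i = 0
      · simp [hci]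
      · have hlt : τ i < τ i₀ := (hmax i (by simpa using hci)).lt_of_ne (hτ.ne hne)
        simp [(hu i).2 _ hlt]
  rw [hc] at hsum
  exact mul_ne_zero (by simpa using hi₀) (hu i₀).1 hsum.symm

end LastNonzero

section Echelon

variable {n k : ℕ} {σ : Fin k ↪o Fin n} {M M' : Matrix (Fin n) (Fin k) ℂ}

theorem Echelon.colVec_apply_pivot (h : Echelon σ M) (j m : Fin k) :
    colVec M j (σ m) = if m = j then 1 else 0 := by
  change M (σ m) j = _
  split_ifs with hmj
  · exact hmj ▸ h.1 m
  · exact h.2.2 j m hmj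

theorem Echelon.linearIndependent (h : Echelon σ M) : LinearIndependent ℂ (colVec M) :=
  linearIndependent_of_pivot h.colVec_apply_pivot

theorem Echelon.finrank_colSpan (h : Echelon σ M) : Module.finrank ℂ (colSpan M) = k := by
  rw [colSpan, finrank_span_eq_card h.linearIndependent, Fintype.card_fin]

/-- The pivot rows read off the coordinates of a vector of `colSpan M` in the columns of `M`. -/
theorem Echelon.eq_of_colSpan_eq (h : Echelon σ M) (h' : Echelon σ M')
    (hs : colSpan M = colSpan M') : M = M' := by
  suffices hcol : ∀ j, colVec M' j = colVec M j by
    ext l j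
    exact congrArg (· l) (hcol j).symm
  intro j
  have hmem : colVec M' j ∈ colSpan M := hs ▸ Submodule.subset_span ⟨j, rfl⟩
  obtain ⟨c, hc⟩ := (Submodule.mem_span_range_iff_exists_fun ℂ).1 hmem
  have hcoef : c = Pi.single j 1 := by
    funext m
    rw [← sum_smul_apply_of_pivot h.colVec_apply_pivot c m, hc, h'.colVec_apply_pivot,
      Pi.single_apply]
  rw [← hc, hcoef]
  simp [Pi.single_apply]

end Echelon

section Flow

variable {n k : ℕ} {σ : Fin k ↪o Fin n} {M : Matrix (Fin n) (Fin k) ℂ}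

/-- The rescaling by `e^{t a_{σ j}}` keeps the pivot entry equal to `1`, so that the columns
converge. -/
noncomputable def flowCol (a : Fin n → ℝ) (σ : Fin k ↪o Fin n) (M : Matrix (Fin n) (Fin k) ℂ)
    (t : ℝ) (j : Fin k) : EuclideanSpace ℂ (Fin n) :=
  (Real.exp (t * a (σ j)) : ℂ) • flowMap n a t (colVec M j)

theorem flowCol_apply (a : Fin n → ℝ) (t : ℝ) (j : Fin k) (l : Fin n) :
    flowCol a σ M t j l = Real.exp (t * (a (σ j) - a l)) * M l j := by
  change (Real.exp (t * a (σ j)) : ℂ) * ((Real.exp (-(t * a l)) : ℂ) * M l j) = _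
  rw [← mul_assoc, ← Complex.ofReal_mul, ← Real.exp_add, mul_sub, sub_eq_add_neg]

theorem span_flowCol (a : Fin n → ℝ) (t : ℝ) :
    Submodule.span ℂ (Set.range (flowCol a σ M t)) = (colSpan M).map (flowMap n a t) := by
  change Submodule.span ℂ (Set.range fun j => (Real.exp (t * a (σ j)) : ℂ) • _) = _
  rw [span_range_smul_eq fun j => by exact_mod_cast (Real.exp_pos _).ne', colSpan,
    Submodule.map_span, ← Set.range_comp]
  rfl

theorem Echelon.flowCol_apply_pivot (h : Echelon σ M) (a : Fin n → ℝ) (t : ℝ) (j m : Fin k) :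
    flowCol a σ M t j (σ m) = if m = j then 1 else 0 := by
  rw [flowCol_apply]
  split_ifs with hmj
  · simp [hmj, h.1 j]
  · simp [h.2.2 j m hmj]

theorem Echelon.tendsto_flowCol (h : Echelon σ M) {a : Fin n → ℝ} (ha : StrictMono a)
    (j : Fin k) :
    Tendsto (fun t => flowCol a σ M t j) atBot (𝓝 (EuclideanSpace.single (σ j) 1)) := by
  have hcoord : Tendsto (fun t => (flowCol a σ M t j).ofLp) atBot
      (𝓝 (EuclideanSpace.single (σ j) (1 : ℂ)).ofLp) := by
    refine tendsto_pi_nhds.2 fun l => ?_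
    simp only [flowCol_apply, PiLp.single_apply]
    rcases lt_trichotomy l (σ j) with hlt | rfl | hgt
    · have hexp : Tendsto (fun t : ℝ => Real.exp (t * (a (σ j) - a l))) atBot (𝓝 0) :=
        Real.tendsto_exp_atBot.comp (tendsto_id.atBot_mul_const (sub_pos.2 (ha hlt)))
      simpa [hlt.ne] using ((Complex.continuous_ofReal.tendsto 0).comp hexp).mul_const (M l j)
    · simp [h.1 j]
    · simp [hgt.ne', h.2.1 j l hgt]
  exact (PiLp.continuous_toLp 2 _).tendsto _ |>.comp hcoord

theorem projCLM_eq_starProjection (V : Submodule ℂ (EuclideanSpace ℂ (Fin n))) :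
    projCLM V = V.starProjection :=
  rfl

theorem coordSub_eq_span_range (I : Finset (Fin n)) (hI : I.card = k) :
    coordSub n I = Submodule.span ℂ
      (Set.range fun j => EuclideanSpace.single (I.orderEmbOfFin hI j) (1 : ℂ)) := by
  rw [coordSub, ← Finset.range_orderEmbOfFin I hI, ← Set.range_comp]
  rfl

theorem Echelon.tendsto_projCLM_flow {a : Fin n → ℝ} (ha : StrictMono a) {I : Finset (Fin n)}
    {hI : I.card = k} (h : Echelon (I.orderEmbOfFin hI) M) :
    Tendsto (fun t => projCLM ((colSpan M).map (flowMap n a t))) atBot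
      (𝓝 (projCLM (coordSub n I))) := by
  simp only [← span_flowCol (σ := I.orderEmbOfFin hI), coordSub_eq_span_range I hI,
    projCLM_eq_starProjection]
  exact tendsto_starProjection_span (tendsto_pi_nhds.2 (h.tendsto_flowCol ha))
    (fun t => linearIndependent_of_pivot (h.flowCol_apply_pivot a t))
    (linearIndependent_of_pivot (σ := I.orderEmbOfFin hI) fun j m => by
      simp [PiLp.single_apply, eq_comm])

end Flow

section PivotRows

variable {n k : ℕ} (V : Submodule ℂ (EuclideanSpace ℂ (Fin n)))

open Classical in
noncomputable def pivotRows : Finset (Fin n) :=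
  Finset.univ.filter fun l => ∃ v ∈ V, IsLastNonzero v.ofLp l

theorem mem_pivotRows {l : Fin n} : l ∈ pivotRows V ↔ ∃ v ∈ V, IsLastNonzero v.ofLp l := by
  simp [pivotRows]

noncomputable def rowRestrict {κ : Type*} (σ : κ → Fin n) : V →ₗ[ℂ] (κ → ℂ) :=
  LinearMap.pi fun j => (EuclideanSpace.proj (σ j) : EuclideanSpace ℂ (Fin n) →L[ℂ] ℂ).toLinearMap
    ∘ₗ V.subtype

@[simp]
theorem rowRestrict_apply {κ : Type*} (σ : κ → Fin n) (v : V) (j : κ) :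
    rowRestrict V σ v j = (v : EuclideanSpace ℂ (Fin n)) (σ j) :=
  rfl

theorem injective_rowRestrict {κ : Type*} {σ : κ → Fin n}
    (hσ : ∀ l ∈ pivotRows V, l ∈ Set.range σ) : Function.Injective (rowRestrict V σ) := by
  refine (injective_iff_map_eq_zero _).2 fun v hv => ?_
  by_contra hne
  obtain ⟨l, hl⟩ := exists_isLastNonzero (v := (v : EuclideanSpace ℂ (Fin n)).ofLp)
    fun h0 => hne (Subtype.ext (WithLp.ofLp_injective 2 h0))
  obtain ⟨j, rfl⟩ := hσ l ((mem_pivotRows V).2 ⟨v, v.2, hl⟩)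
  exact hl.1 (congrFun hv j)

theorem card_pivotRows : (pivotRows V).card = Module.finrank ℂ V := by
  apply le_antisymm
  · choose u huV hu using fun l : pivotRows V => (mem_pivotRows V).1 l.2
    have hli : LinearIndependent ℂ fun l => (⟨u l, huV l⟩ : V) :=
      .of_comp ((WithLp.linearEquiv 2 ℂ (Fin n → ℂ)).toLinearMap ∘ₗ V.subtype)
        (linearIndependent_of_isLastNonzero Subtype.val_injective hu)
    simpa using hli.fintype_card_le_finrank
  · simpa using LinearMap.finrank_le_finrank_of_injective
      (injective_rowRestrict V (σ := Subtype.val) fun l hl => ⟨⟨l, hl⟩, rfl⟩)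

/-- Gaussian elimination: the basis of `V` dual to the coordinates in the pivot rows is the
column set of an echelon matrix. -/
theorem exists_echelon_colSpan_eq (hV : Module.finrank ℂ V = k) :
    ∃ (J : Finset (Fin n)) (hJ : J.card = k) (M : Matrix (Fin n) (Fin k) ℂ),
      Echelon (J.orderEmbOfFin hJ) M ∧ V = colSpan M := by
  have hJ : (pivotRows V).card = k := (card_pivotRows V).trans hV
  set σ := (pivotRows V).orderEmbOfFin hJ
  have hrange : Set.range σ = pivotRows V := Finset.range_orderEmbOfFin _ _
  have hinj : Function.Injective (rowRestrict V σ) :=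
    injective_rowRestrict V fun l hl => hrange ▸ hl
  obtain ⟨e, he⟩ : ∃ e : V ≃ₗ[ℂ] (Fin k → ℂ), ⇑e = rowRestrict V σ :=
    ⟨.ofBijective _ ⟨hinj,
      (LinearMap.injective_iff_surjective_of_finrank_eq_finrank (by simp [hV])).1 hinj⟩, rfl⟩
  let w j : EuclideanSpace ℂ (Fin n) := e.symm (Pi.single j 1)
  let M : Matrix (Fin n) (Fin k) ℂ := fun l j => w j l
  have hpivot : ∀ j m, M (σ m) j = if m = j then 1 else 0 := fun j m => by
    have h := congrFun (e.apply_symm_apply (Pi.single j 1)) m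
    rwa [he, rowRestrict_apply, Pi.single_apply] at h
  have hlast : ∀ j, IsLastNonzero (fun l => M l j) (σ j) := by
    intro j
    obtain ⟨l, hl⟩ := exists_isLastNonzero (v := fun l => M l j)
      fun h0 => by simpa [hpivot] using congrFun h0 (σ j)
    obtain ⟨m, rfl⟩ : l ∈ Set.range σ := hrange ▸ (mem_pivotRows V).2 ⟨w j, (e.symm _).2, hl⟩
    obtain rfl : m = j := by_contra fun hmj => hl.1 (by simp [hpivot, hmj])
    exact hl
  have hech : Echelon σ M :=
    ⟨fun j => by simpa using hpivot j j, fun j l hl => (hlast j).2 l hl,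
      fun j m hmj => by simpa [hmj] using hpivot j m⟩
  refine ⟨pivotRows V, hJ, M, hech, (Submodule.eq_of_le_of_finrank_eq ?_ ?_).symm⟩
  · rw [colSpan, Submodule.span_le]
    rintro _ ⟨j, rfl⟩
    exact (e.symm (Pi.single j 1)).2
  · rw [hech.finrank_colSpan, hV]

end PivotRows

section Parametrization

variable {n k : ℕ} (σ : Fin k ↪o Fin n)

def freeRows (j : Fin k) : Finset (Fin n) :=
  Finset.Iio (σ j) \ (Finset.Iio j).map σ.toEmbedding

theorem mem_freeRows {j : Fin k} {l : Fin n} :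
    l ∈ freeRows σ j ↔ l < σ j ∧ l ∉ Set.range σ := by
  simp only [freeRows, Finset.mem_sdiff, Finset.mem_Iio, Finset.mem_map, Set.mem_range,
    RelEmbedding.coe_toEmbedding]
  refine and_congr_right fun hl => not_congr ⟨fun ⟨m, _, hm⟩ => ⟨m, hm⟩, ?_⟩
  rintro ⟨m, rfl⟩
  exact ⟨m, σ.lt_iff_lt.1 hl, rfl⟩

theorem card_freeRows (j : Fin k) : (freeRows σ j).card = σ j - j := by
  rw [freeRows, Finset.card_sdiff_of_subset, Fin.card_Iio, Finset.card_map, Fin.card_Iio]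
  intro l
  simp only [Finset.mem_map, Finset.mem_Iio, RelEmbedding.coe_toEmbedding]
  rintro ⟨m, hm, rfl⟩
  exact σ.lt_iff_lt.2 hm

variable {σ} in
theorem echelon_iff {M : Matrix (Fin n) (Fin k) ℂ} :
    Echelon σ M ↔ ∀ j l, l ∉ freeRows σ j → M l j = if l = σ j then 1 else 0 := by
  simp only [mem_freeRows, not_and_or, not_lt, not_not]
  refine ⟨fun h j l hl => ?_, fun h => ⟨fun j => ?_, fun j l hl => ?_, fun j m hmj => ?_⟩⟩
  · split_ifs with hlj
    · exact hlj ▸ h.1 j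
    rcases hl with hl | ⟨m, rfl⟩
    · exact h.2.1 j l (lt_of_le_of_ne hl (Ne.symm hlj))
    · exact h.2.2 j m fun hmj => hlj (hmj ▸ rfl)
  · simpa using h j (σ j) (.inl le_rfl)
  · simpa [hl.ne'] using h j l (.inl hl.le)
  · simpa [σ.injective.ne hmj] using h j (σ m) (.inr ⟨m, rfl⟩)

noncomputable def echelonEquivFreeEntries :
    {M : Matrix (Fin n) (Fin k) ℂ // Echelon σ M} ≃ ∀ j, (freeRows σ j → ℂ) where
  toFun M j l := M.1 l j
  invFun f := ⟨fun l j => if h : l ∈ freeRows σ j then f j ⟨l, h⟩ else if l = σ j then 1 else 0,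
    echelon_iff.2 fun j l hl => by simp [hl]⟩
  left_inv M := by
    ext l j
    by_cases hl : l ∈ freeRows σ j
    · simp [hl]
    · simp [hl, echelon_iff.1 M.2 j l hl]
  right_inv f := by
    ext j l
    simp [l.2]

noncomputable def echelonEquiv :
    {M : Matrix (Fin n) (Fin k) ℂ // Echelon σ M} ≃ ∀ j : Fin k, Fin (σ j - j) → ℂ :=
  (echelonEquivFreeEntries σ).trans <| .piCongrRight fun j =>
    ((freeRows σ j).equivFinOfCardEq (card_freeRows σ j)).arrowCongr (.refl ℂ)

end Parametrization

section UnstableSet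

variable {n k : ℕ} {a : Fin n → ℝ} {I : Finset (Fin n)}

theorem coordSub_injective : Function.Injective (coordSub n) := by
  let b := (EuclideanSpace.basisFun (Fin n) ℂ).toBasis
  have hb : ∀ I, coordSub n I = Submodule.span ℂ (b '' I) := fun I => by
    simp [coordSub, b]
  intro I J h
  ext i
  rw [← Finset.mem_coe, ← b.self_mem_span_image, ← hb, h, hb, b.self_mem_span_image,
    Finset.mem_coe]

theorem tendsto_projCLM_flow_iff (ha : StrictMono a) (hI : I.card = k)
    (V : Submodule ℂ (EuclideanSpace ℂ (Fin n))) (hV : Module.finrank ℂ V = k) :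
    Tendsto (fun t => projCLM (V.map (flowMap n a t))) atBot (𝓝 (projCLM (coordSub n I))) ↔
      ∃! M, Echelon (I.orderEmbOfFin hI) M ∧ V = colSpan M := by
  constructor
  · intro hT
    obtain ⟨J, hJ, M, hM, rfl⟩ := exists_echelon_colSpan_eq V hV
    have hlim := tendsto_nhds_unique (hM.tendsto_projCLM_flow ha) hT
    obtain rfl : J = I := coordSub_injective (Submodule.starProjection_inj.1 hlim)
    exact ⟨M, ⟨hM, rfl⟩, fun M' ⟨hM', hs⟩ => hM'.eq_of_colSpan_eq hM hs.symm⟩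
  · rintro ⟨M, ⟨hM, rfl⟩, -⟩
    exact hM.tendsto_projCLM_flow ha

noncomputable def echelonEquivUnstableSet (ha : StrictMono a) (hI : I.card = k) :
    {M : Matrix (Fin n) (Fin k) ℂ // Echelon (I.orderEmbOfFin hI) M} ≃
      {V : Submodule ℂ (EuclideanSpace ℂ (Fin n)) // Module.finrank ℂ V = k ∧
        Tendsto (fun t => projCLM (V.map (flowMap n a t))) atBot (𝓝 (projCLM (coordSub n I)))} :=
  .ofBijective (fun M => ⟨colSpan M.1, M.2.finrank_colSpan, M.2.tendsto_projCLM_flow ha⟩)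
    ⟨fun M M' h => Subtype.ext (M.2.eq_of_colSpan_eq M'.2 (congrArg Subtype.val h)),
      fun V => by
        obtain ⟨M, hM, -⟩ := (tendsto_projCLM_flow_iff ha hI V V.2.1).1 V.2.2
        exact ⟨⟨M, hM.1⟩, Subtype.ext hM.2.symm⟩⟩

end UnstableSet

theorem stmt11_general (n k : ℕ) (a : Fin n → ℝ) (ha : StrictMono a)
    (I : Finset (Fin n)) (hI : I.card = k) :
    (∀ V : Submodule ℂ (EuclideanSpace ℂ (Fin n)), Module.finrank ℂ V = k →
      (Filter.Tendsto (fun t : ℝ => projCLM (V.map (flowMap n a t))) Filter.atBot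
          (nhds (projCLM (coordSub n I))) ↔
        ∃! M : Matrix (Fin n) (Fin k) ℂ,
          Echelon (I.orderEmbOfFin hI) M ∧ V = colSpan M)) ∧
    Nonempty
      ({V : Submodule ℂ (EuclideanSpace ℂ (Fin n)) //
          Module.finrank ℂ V = k ∧
          Filter.Tendsto (fun t : ℝ => projCLM (V.map (flowMap n a t))) Filter.atBot
            (nhds (projCLM (coordSub n I)))} ≃
        ∀ j : Fin k, Fin ((I.orderEmbOfFin hI j : ℕ) - (j : ℕ)) → ℂ) :=
  ⟨tendsto_projCLM_flow_iff ha hI,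
    ⟨(echelonEquivUnstableSet ha hI).symm.trans (echelonEquiv (I.orderEmbOfFin hI))⟩⟩

/-- Schubert-cell description of the unstable set of the coordinate subspace
`E_I` under the flow `V ↦ exp(−tA)·V`: a `k`-plane `V` flows (in the projection
metric) to `E_I` as `t → −∞` iff `V` is the column span of a (unique) matrix in
column-echelon form with pivots `I`; consequently the unstable set is in
bijection with `∏_{j=1}^{k} ℂ^{i_j − j}`. -/
theorem stmt11 (n k : ℕ) (hkn : k ≤ n) (a : Fin n → ℝ) (ha : StrictMono a)
    (I : Finset (Fin n)) (hI : I.card = k) :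
    (∀ V : Submodule ℂ (EuclideanSpace ℂ (Fin n)), Module.finrank ℂ V = k →
      (Filter.Tendsto (fun t : ℝ => projCLM (V.map (flowMap n a t))) Filter.atBot
          (nhds (projCLM (coordSub n I))) ↔
        ∃! M : Matrix (Fin n) (Fin k) ℂ,
          Echelon (I.orderEmbOfFin hI) M ∧ V = colSpan M)) ∧
    Nonempty
      ({V : Submodule ℂ (EuclideanSpace ℂ (Fin n)) //
          Module.finrank ℂ V = k ∧
          Filter.Tendsto (fun t : ℝ => projCLM (V.map (flowMap n a t))) Filter.atBot
            (nhds (projCLM (coordSub n I)))} ≃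
        ∀ j : Fin k, Fin ((I.orderEmbOfFin hI j : ℕ) - (j : ℕ)) → ℂ) :=
  stmt11_general n k a ha I hI

end Stmt11
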